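/- Under the stated setup, for every f ∈ A and every multi-index α ∈ ℕ^n, the element f_α lies in the k-linear span of the set {(D_{i_1} ∘ ⋯ ∘ D_{i_m})(f) : m ≥ 0, i_1,…,i_m ∈ {1,…,n}} (where the empty composite is f itself). -/

import Mathlib

open TensorProduct

noncomputable section

variable {k : Type*} [Field k] {n : ℕ}
variable {A : Type*} [CommRing A] [Algebra k A]

/-- The coefficient-extraction linear map `k[u₁,…,u_n] → k`. -/
def lcoeffMv (k : Type*) [CommSemiring k] {n : ℕ} (β : Fin n →₀ ℕ) :
    MvPolynomial (Fin n) k →ₗ[k] k where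
  toFun p := MvPolynomial.coeff β p
  map_add' p q := MvPolynomial.coeff_add β p q
  map_smul' c p := by simp [MvPolynomial.coeff_smul]

/-- Evaluation at `u = 0`, a `k`-algebra map `k[u₁,…,u_n] → k`. -/
def evalZero (k : Type*) [CommSemiring k] (n : ℕ) : MvPolynomial (Fin n) k →ₐ[k] k :=
  MvPolynomial.aeval 0

/-- Extraction of the coefficient of `u^α` in the first tensor factor:
for `φ(f) = Σ_α u^α ⊗ f_α`, this sends `φ(f)` to `f_α`. -/
def coeffFst (k : Type*) [Field k] {n : ℕ} (A : Type*) [CommRing A] [Algebra k A]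
    (α : Fin n →₀ ℕ) : (MvPolynomial (Fin n) k ⊗[k] A) →ₗ[k] A :=
  (TensorProduct.lid k A).toLinearMap ∘ₗ TensorProduct.map (lcoeffMv k α) LinearMap.id

/-- The operator `D_i : A → A`, `f ↦ f_{e_i}`. -/
def Dop (φ : A →ₐ[k] MvPolynomial (Fin n) k ⊗[k] A) (i : Fin n) (f : A) : A :=
  coeffFst k A (Finsupp.single i 1) (φ f)

/-! Let `δᵢ p` be the `uᵢ`-coefficient of `μ p` in the first tensor factor. Counitality makes `δᵢ`
a derivation of `k[u]` with `δᵢ uⱼ ≡ [i = j]` modulo the ideal `(u)`, so `δᵢ - ∂ᵢ` preserves every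
power `(u)^m`: the polynomials `δᵢ(u^γ)` and `∂ᵢ(u^γ)` agree in degrees below `|γ|`.
The `uᵢ ⊗ u^β`-coefficient of coassociativity reads `(Dᵢ f)_β = Σ_γ [u^β] δᵢ(u^γ) · f_γ`, which is
therefore `(βᵢ + 1) f_{β + eᵢ}` plus a combination of the `f_γ` with `|γ| ≤ |β|`. Induction on `|α|`
concludes, `βᵢ + 1` being invertible in characteristic zero. -/

open MvPolynomial

local notation "H" => MvPolynomial (Fin n) k

variable (k A) in
def polyTensorEquiv : H ⊗[k] A ≃ₐ[k] MvPolynomial (Fin n) A :=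
  (Algebra.TensorProduct.comm k H A).trans ((algebraTensorAlgEquiv k A).restrictScalars k)

lemma polyTensorEquiv_tmul (p : H) (a : A) :
    polyTensorEquiv k A (p ⊗ₜ a) = a • map (algebraMap k A) p := by
  simp [polyTensorEquiv]

lemma polyTensorEquiv_symm_monomial (γ : Fin n →₀ ℕ) (a : A) :
    (polyTensorEquiv k A).symm (monomial γ a) = monomial γ 1 ⊗ₜ a := by
  simp [polyTensorEquiv]

lemma coeffFst_tmul (α : Fin n →₀ ℕ) (p : H) (a : A) :
    coeffFst k A α (p ⊗ₜ a) = coeff α p • a := by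
  simp [coeffFst, lcoeffMv]

lemma coeffFst_eq_coeff (α : Fin n →₀ ℕ) (t : H ⊗[k] A) :
    coeffFst k A α t = coeff α (polyTensorEquiv k A t) := by
  induction t with
  | zero => simp
  | tmul p a => simp [coeffFst_tmul, polyTensorEquiv_tmul, Algebra.smul_def, mul_comm, coeff_map]
  | add x y hx hy => simp [hx, hy]

lemma sum_monomial_tmul_coeffFst (t : H ⊗[k] A) :
    ∑ γ ∈ (polyTensorEquiv k A t).support, monomial γ 1 ⊗ₜ coeffFst k A γ t = t := by
  simp_rw [coeffFst_eq_coeff, ← polyTensorEquiv_symm_monomial, ← map_sum,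
    support_sum_monomial_coeff, AlgEquiv.symm_apply_apply]

lemma lid_map_eq_sum (L : H →ₗ[k] k) (t : H ⊗[k] A) :
    TensorProduct.lid k A (TensorProduct.map L LinearMap.id t) =
      ∑ γ ∈ (polyTensorEquiv k A t).support, L (monomial γ 1) • coeffFst k A γ t := by
  conv_lhs => rw [← sum_monomial_tmul_coeffFst t]
  simp [map_sum]

lemma evalZero_apply (p : H) : evalZero k n p = coeff 0 p := by
  simp [evalZero, constantCoeff_eq]

lemma coeffFst_zero (t : H ⊗[k] A) :
    coeffFst k A 0 t = Algebra.TensorProduct.lid k A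
      (Algebra.TensorProduct.map (evalZero k n) (AlgHom.id k A) t) := by
  induction t with
  | zero => simp
  | tmul p a => simp [coeffFst_tmul, evalZero_apply]
  | add x y hx hy => simp [hx, hy]

lemma coeff_zero_coeffFst (α : Fin n →₀ ℕ) (t : H ⊗[k] H) :
    coeff 0 (coeffFst k H α t) =
      coeff α (Algebra.TensorProduct.rid k k H
        (Algebra.TensorProduct.map (AlgHom.id k H) (evalZero k n) t)) := by
  induction t with
  | zero => simp
  | tmul p q => simp [coeffFst_tmul, evalZero_apply, mul_comm]
  | add x y hx hy => simp [hx, hy]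

lemma coeff_single_eq_constantCoeff_pderiv {R : Type*} [CommSemiring R] (i : Fin n)
    (P : MvPolynomial (Fin n) R) :
    coeff (Finsupp.single i 1) P = constantCoeff (pderiv i P) := by
  simp [constantCoeff_eq, coeff_pderiv]

lemma coeffFst_single_mul (i : Fin n) (x y : H ⊗[k] A) :
    coeffFst k A (Finsupp.single i 1) (x * y) =
      coeffFst k A 0 x * coeffFst k A (Finsupp.single i 1) y +
        coeffFst k A (Finsupp.single i 1) x * coeffFst k A 0 y := by
  simp only [coeffFst_eq_coeff, map_mul, coeff_single_eq_constantCoeff_pderiv,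
    ← constantCoeff_eq, Derivation.leibniz, smul_eq_mul, map_add]
  ring

def coactionDerivation (φ : A →ₐ[k] H ⊗[k] A) (hφ : ∀ f, coeffFst k A 0 (φ f) = f)
    (i : Fin n) : Derivation k A A :=
  Derivation.mk' (coeffFst k A (Finsupp.single i 1) ∘ₗ φ.toLinearMap) fun f g => by
    simp only [LinearMap.comp_apply, AlgHom.toLinearMap_apply, map_mul, coeffFst_single_mul, hφ,
      smul_eq_mul]
    ring

lemma coactionDerivation_apply (φ : A →ₐ[k] H ⊗[k] A) (hφ : ∀ f, coeffFst k A 0 (φ f) = f)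
    (i : Fin n) (f : A) : coactionDerivation φ hφ i f = Dop φ i f := rfl

section IdealPowers

variable {R B : Type*} [CommSemiring R] [CommRing B] [Algebra R B]

lemma Derivation.map_mem_span_of_forall_mem (D : Derivation R B B) {s : Set B}
    (hs : ∀ x ∈ s, D x ∈ Ideal.span s) {x : B} (hx : x ∈ Ideal.span s) :
    D x ∈ Ideal.span s := by
  induction hx using Submodule.span_induction with
  | mem x h => exact hs x h
  | zero => simp
  | add x y _ _ hx hy => simpa using add_mem hx hy
  | smul a x hx' hx =>
    rw [smul_eq_mul, D.leibniz]
    exact add_mem (Ideal.mul_mem_left _ _ hx) (Ideal.mul_mem_right _ _ hx')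

lemma Derivation.map_mem_pow_of_forall_mem (D : Derivation R B B) {I : Ideal B}
    (hI : ∀ x ∈ I, D x ∈ I) (m : ℕ) {x : B} (hx : x ∈ I ^ m) : D x ∈ I ^ m := by
  induction m generalizing x with
  | zero => simp
  | succ m ih =>
    rw [pow_succ] at hx ⊢
    induction hx using Submodule.mul_induction_on' with
    | mem_mul_mem a ha b hb =>
      rw [D.leibniz, smul_eq_mul, smul_eq_mul, mul_comm b]
      exact add_mem (Ideal.mul_mem_mul ha (hI b hb)) (Ideal.mul_mem_mul (ih ha) hb)
    | add x _ y _ hx hy => simpa using add_mem hx hy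

end IdealPowers

lemma MvPolynomial.coeff_derivation_monomial_of_degree_lt {σ R : Type*} [CommRing R]
    (D : Derivation R (MvPolynomial σ R) (MvPolynomial σ R))
    (hD : ∀ j, constantCoeff (D (X j)) = 0) {β γ : σ →₀ ℕ} (h : β.degree < γ.degree) :
    coeff β (D (monomial γ 1)) = 0 := by
  have hI : ∀ x ∈ idealOfVars σ R, D x ∈ idealOfVars σ R := by
    refine fun x => D.map_mem_span_of_forall_mem ?_
    rintro _ ⟨j, rfl⟩
    refine (pow_one (idealOfVars σ R)).le ((mem_pow_idealOfVars_iff' 1 _).2 fun x hx => ?_)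
    rw [Nat.lt_one_iff, Finsupp.degree_eq_zero_iff] at hx
    rw [hx, ← constantCoeff_eq, hD]
  have hγ : monomial γ (1 : R) ∈ idealOfVars σ R ^ γ.degree := by
    rw [mem_pow_idealOfVars_iff]
    intro x hx
    rw [Finset.mem_singleton.1 (support_monomial_subset hx)]
  exact (mem_pow_idealOfVars_iff' _ _).1 (D.map_mem_pow_of_forall_mem hI _ hγ) β h

lemma coeff_Dop_monomial_of_degree_lt (μ : H →ₐ[k] H ⊗[k] H)
    (hμ1 : ∀ p, coeffFst k H 0 (μ p) = p)
    (hμ2 : ∀ p, Algebra.TensorProduct.rid k k H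
      (Algebra.TensorProduct.map (AlgHom.id k H) (evalZero k n) (μ p)) = p)
    (i : Fin n) {β γ : Fin n →₀ ℕ} (h : β.degree < γ.degree) :
    coeff β (Dop μ i (monomial γ 1)) = coeff β (pderiv i (monomial γ 1)) := by
  have hD : ∀ j, constantCoeff
      ((coactionDerivation μ hμ1 i - pderiv i : Derivation k H H) (X j)) = 0 := by
    intro j
    rw [Derivation.coe_sub, Pi.sub_apply, map_sub, coactionDerivation_apply,
      ← coeff_single_eq_constantCoeff_pderiv, constantCoeff_eq, Dop, coeff_zero_coeffFst, hμ2,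
      sub_self]
  simpa [sub_eq_zero, coactionDerivation_apply] using
    coeff_derivation_monomial_of_degree_lt _ hD h

lemma lid_map_coeff_map_id (α β : Fin n →₀ ℕ) (φ : A →ₐ[k] H ⊗[k] A) (t : H ⊗[k] A) :
    TensorProduct.lid k A (TensorProduct.map (lcoeffMv k α) (coeffFst k A β)
      (Algebra.TensorProduct.map (AlgHom.id k H) φ t)) =
      coeffFst k A β (φ (coeffFst k A α t)) := by
  induction t with
  | zero => simp
  | tmul p a => simp [coeffFst_tmul, lcoeffMv]
  | add x y hx hy => simp [hx, hy]

lemma lid_map_coeff_assoc_tmul (α β : Fin n →₀ ℕ) (T : H ⊗[k] H) (a : A) :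
    TensorProduct.lid k A (TensorProduct.map (lcoeffMv k α) (coeffFst k A β)
      (Algebra.TensorProduct.assoc k k k H H A (T ⊗ₜ a))) =
      coeff β (coeffFst k H α T) • a := by
  induction T with
  | zero => simp
  | tmul p q => simp [coeffFst_tmul, lcoeffMv, smul_comm (coeff β q), mul_smul]
  | add x y hx hy => simp [TensorProduct.add_tmul, hx, hy, add_smul]

lemma lid_map_coeff_assoc_map (α β : Fin n →₀ ℕ) (μ : H →ₐ[k] H ⊗[k] H) (t : H ⊗[k] A) :
    TensorProduct.lid k A (TensorProduct.map (lcoeffMv k α) (coeffFst k A β)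
      (Algebra.TensorProduct.assoc k k k H H A (Algebra.TensorProduct.map μ (AlgHom.id k A) t))) =
      TensorProduct.lid k A (TensorProduct.map
        (lcoeffMv k β ∘ₗ coeffFst k H α ∘ₗ μ.toLinearMap) LinearMap.id t) := by
  induction t with
  | zero => simp
  | tmul p a =>
    rw [Algebra.TensorProduct.map_tmul, AlgHom.id_apply, lid_map_coeff_assoc_tmul]
    rfl
  | add x y hx hy => simp only [map_add, hx, hy]

/-- The `u_i ⊗ u^β`-coefficient of the coassociativity identity `(μ ⊗ id) ∘ φ = (id ⊗ φ) ∘ φ`. -/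
lemma coeffFst_Dop_eq_sum (μ : H →ₐ[k] H ⊗[k] H) (φ : A →ₐ[k] H ⊗[k] A)
    (hφ2 : ∀ f, Algebra.TensorProduct.assoc k k k H H A
      (Algebra.TensorProduct.map μ (AlgHom.id k A) (φ f)) =
        Algebra.TensorProduct.map (AlgHom.id k H) φ (φ f))
    (i : Fin n) (β : Fin n →₀ ℕ) (f : A) :
    coeffFst k A β (φ (Dop φ i f)) =
      ∑ γ ∈ (polyTensorEquiv k A (φ f)).support,
        coeff β (Dop μ i (monomial γ 1)) • coeffFst k A γ (φ f) := by
  have h := congrArg (fun t => TensorProduct.lid k A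
    (TensorProduct.map (lcoeffMv k (Finsupp.single i 1)) (coeffFst k A β) t)) (hφ2 f)
  simp only [lid_map_coeff_assoc_map, lid_map_coeff_map_id, lid_map_eq_sum] at h
  exact h.symm

lemma sum_coeff_pderiv_monomial_smul (i : Fin n) (β : Fin n →₀ ℕ) (t : H ⊗[k] A) :
    ∑ γ ∈ (polyTensorEquiv k A t).support,
        coeff β (pderiv i (monomial γ (1 : k))) • coeffFst k A γ t =
      ((β i : k) + 1) • coeffFst k A (β + Finsupp.single i 1) t := by
  refine (lid_map_eq_sum (lcoeffMv k β ∘ₗ (pderiv i).toLinearMap) t).symm.trans ?_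
  induction t with
  | zero => simp
  | tmul p a => simp [coeffFst_tmul, lcoeffMv, coeff_pderiv, mul_smul, smul_comm (coeff _ p)]
  | add x y hx hy => simp only [map_add, hx, hy, smul_add]

def iterSpan (φ : A →ₐ[k] H ⊗[k] A) (f : A) : Submodule k A :=
  Submodule.span k {g : A | ∃ l : List (Fin n), g = l.foldr (fun i x => Dop φ i x) f}

lemma self_mem_iterSpan (φ : A →ₐ[k] H ⊗[k] A) (f : A) : f ∈ iterSpan φ f :=
  Submodule.subset_span ⟨[], rfl⟩

lemma iterSpan_Dop_le (φ : A →ₐ[k] H ⊗[k] A) (i : Fin n) (f : A) :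
    iterSpan φ (Dop φ i f) ≤ iterSpan φ f :=
  Submodule.span_le.2 <| by
    rintro _ ⟨l, rfl⟩
    exact Submodule.subset_span ⟨l ++ [i], by simp⟩

theorem coeffFst_mem_iterSpan [CharZero k] (μ : H →ₐ[k] H ⊗[k] H)
    (hμ1 : ∀ p, coeffFst k H 0 (μ p) = p)
    (hμ2 : ∀ p, Algebra.TensorProduct.rid k k H
      (Algebra.TensorProduct.map (AlgHom.id k H) (evalZero k n) (μ p)) = p)
    (φ : A →ₐ[k] H ⊗[k] A) (hφ1 : ∀ f, coeffFst k A 0 (φ f) = f)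
    (hφ2 : ∀ f, Algebra.TensorProduct.assoc k k k H H A
      (Algebra.TensorProduct.map μ (AlgHom.id k A) (φ f)) =
        Algebra.TensorProduct.map (AlgHom.id k H) φ (φ f))
    (α : Fin n →₀ ℕ) (f : A) : coeffFst k A α (φ f) ∈ iterSpan φ f := by
  rcases eq_or_ne α 0 with rfl | hα0
  · rw [hφ1]
    exact self_mem_iterSpan φ f
  obtain ⟨i, hi⟩ := Finsupp.ne_iff.1 hα0
  set β := α - Finsupp.single i 1
  have hαβ : α = β + Finsupp.single i 1 :=
    (tsub_add_cancel_of_le (Finsupp.single_le_iff.2 (Nat.one_le_iff_ne_zero.2 hi))).symm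
  have hβ : β.degree < α.degree := by
    rw [hαβ, map_add, Finsupp.degree_single]
    omega
  have key : ((β i : k) + 1) • coeffFst k A α (φ f) =
      coeffFst k A β (φ (Dop φ i f)) - ∑ γ ∈ (polyTensorEquiv k A (φ f)).support,
        (coeff β (Dop μ i (monomial γ 1)) - coeff β (pderiv i (monomial γ (1 : k)))) •
          coeffFst k A γ (φ f) := by
    simp only [sub_smul, Finset.sum_sub_distrib, sum_coeff_pderiv_monomial_smul,
      coeffFst_Dop_eq_sum μ φ hφ2, ← hαβ, sub_sub_cancel]
  have hmem : ((β i : k) + 1) • coeffFst k A α (φ f) ∈ iterSpan φ f := by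
    rw [key]
    refine sub_mem (iterSpan_Dop_le φ i f
      (coeffFst_mem_iterSpan μ hμ1 hμ2 φ hφ1 hφ2 β (Dop φ i f))) (sum_mem fun γ _ => ?_)
    rcases le_or_gt γ.degree β.degree with hγ | hγ
    · exact Submodule.smul_mem _ _ (coeffFst_mem_iterSpan μ hμ1 hμ2 φ hφ1 hφ2 γ f)
    · rw [coeff_Dop_monomial_of_degree_lt μ hμ1 hμ2 i hγ, sub_self, zero_smul]
      exact zero_mem _
  exact (Submodule.smul_mem_iff _ (Nat.cast_add_one_ne_zero (β i))).1 hmem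
termination_by α.degree

/-- For every `f ∈ A` and every multi-index `α`, the
coefficient `f_α` lies in the `k`-linear span of the iterated composites
`(D_{i_1} ∘ ⋯ ∘ D_{i_m})(f)`. -/
theorem statement17 [CharZero k]
    (μ : MvPolynomial (Fin n) k →ₐ[k] MvPolynomial (Fin n) k ⊗[k] MvPolynomial (Fin n) k)
    (hμ1 : ∀ p : MvPolynomial (Fin n) k,
      Algebra.TensorProduct.lid k (MvPolynomial (Fin n) k)
        (Algebra.TensorProduct.map (evalZero k n) (AlgHom.id k (MvPolynomial (Fin n) k)) (μ p)) = p)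
    (hμ2 : ∀ p : MvPolynomial (Fin n) k,
      Algebra.TensorProduct.rid k k (MvPolynomial (Fin n) k)
        (Algebra.TensorProduct.map (AlgHom.id k (MvPolynomial (Fin n) k)) (evalZero k n) (μ p)) = p)
    (φ : A →ₐ[k] MvPolynomial (Fin n) k ⊗[k] A)
    (hφ1 : ∀ f : A,
      Algebra.TensorProduct.lid k A
        (Algebra.TensorProduct.map (evalZero k n) (AlgHom.id k A) (φ f)) = f)
    (hφ2 : ∀ f : A,
      Algebra.TensorProduct.assoc k k k (MvPolynomial (Fin n) k) (MvPolynomial (Fin n) k) A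
          (Algebra.TensorProduct.map μ (AlgHom.id k A) (φ f)) =
        Algebra.TensorProduct.map (AlgHom.id k (MvPolynomial (Fin n) k)) φ (φ f))
    (f : A) (α : Fin n →₀ ℕ) :
    coeffFst k A α (φ f) ∈
      Submodule.span k {g : A | ∃ l : List (Fin n), g = l.foldr (fun i x => Dop φ i x) f} := by
  have hμ0 : ∀ p, coeffFst k (MvPolynomial (Fin n) k) 0 (μ p) = p :=
    fun p => (coeffFst_zero (μ p)).trans (hμ1 p)
  have hφ0 : ∀ f, coeffFst k A 0 (φ f) = f := fun f => (coeffFst_zero (φ f)).trans (hφ1 f)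
  exact coeffFst_mem_iterSpan μ hμ0 hμ2 φ hφ0 hφ2 α f
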